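/- Let p_k = (k, k + 1/k) for k ∈ ℕ, k ≥ 1, and for each 0-1 sequence u let Dg_u be the persistence diagram {p_i : i ∈ supp(u)}. Then the set S = {Dg_u : u ∈ {0,1}^ℕ}, equipped with the 1-diagram distance d_1, is not a separable metric space. -/

import Mathlib

open scoped ENNReal

noncomputable section

/-- The point `p_k = (k, k + 1/k)`. -/
def pk (k : ℕ) : ℝ × ℝ := ((k : ℝ), (k : ℝ) + 1 / (k : ℝ))

/-- The `ℓ∞` distance of a point of the plane to the diagonal, as an extended real. -/
def distDeltaE (q : ℝ × ℝ) : ℝ≥0∞ := ENNReal.ofReal ((q.2 - q.1) / 2)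

/-- A partial matching between two (countable) diagrams given as sets of points:
a set of pairs contained in `D₁ × D₂` which is a partial bijection. -/
def IsPartialMatching (Γ : Set ((ℝ × ℝ) × (ℝ × ℝ))) (D₁ D₂ : Set (ℝ × ℝ)) : Prop :=
  (∀ pq ∈ Γ, pq.1 ∈ D₁ ∧ pq.2 ∈ D₂) ∧
    ∀ pq ∈ Γ, ∀ pq' ∈ Γ, (pq.1 = pq'.1 ↔ pq.2 = pq'.2)

/-- The `1`-cost of a partial matching: sum of the `ℓ∞` distances between matched
points plus the `ℓ∞` distances to the diagonal of unmatched points, valued in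
`[0, +∞]`.  (Note: `dist` on `ℝ × ℝ` is the `ℓ∞` distance.) -/
def cost1 (Γ : Set ((ℝ × ℝ) × (ℝ × ℝ))) (D₁ D₂ : Set (ℝ × ℝ)) : ℝ≥0∞ :=
  (∑' pq : Γ, ENNReal.ofReal (dist (pq : (ℝ × ℝ) × (ℝ × ℝ)).1
      (pq : (ℝ × ℝ) × (ℝ × ℝ)).2))
    + (∑' q : ↥(D₁ \ Prod.fst '' Γ), distDeltaE q)
    + (∑' q : ↥(D₂ \ Prod.snd '' Γ), distDeltaE q)

/-- The `1`-diagram distance between two (countable) diagrams, valued in `[0, +∞]`. -/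
def d1 (D₁ D₂ : Set (ℝ × ℝ)) : ℝ≥0∞ :=
  ⨅ (Γ : Set ((ℝ × ℝ) × (ℝ × ℝ))) (_ : IsPartialMatching Γ D₁ D₂), cost1 Γ D₁ D₂

/-- The diagram `Dg_u = {p_i : i ∈ supp u}` associated to a set `u` of indices. -/
def Dgu (u : Set ℕ) : Set (ℝ × ℝ) := pk '' u

/-- The set `S = {Dg_u : u a 0-1 sequence}` (supports consisting of indices `≥ 1`). -/
def Sdiag : Set (Set (ℝ × ℝ)) := {D | ∃ u : Set ℕ, (∀ k ∈ u, 1 ≤ k) ∧ D = Dgu u}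

/-!
Distinct points `p_i` are at `ℓ∞` distance at least `1`, so every partial matching pays at
least the persistence `1/(2i)` of each `p_i` lying in one diagram but not in the other. The
dyadic blocks `(2^n, 2^(n+1)]` each carry persistence at least `1/4`; for `s ⊆ ℕ` let `U_s` be
the union of the blocks indexed by `s`. If `n ∈ s \ t`, no diagram `Dg_w` is `1/8`-close to both
`Dg_{U_s}` and `Dg_{U_t}`: the indices of block `n` outside `w` are paid for in the first
distance, those inside `w` in the second. Hence a `1/8`-dense subset of `S` receives an injection
from the power set of `ℕ`, and cannot be countable.
-/

section Matching

variable {Γ : Set ((ℝ × ℝ) × (ℝ × ℝ))} {D₁ D₂ : Set (ℝ × ℝ)}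

theorem IsPartialMatching.swap (hΓ : IsPartialMatching Γ D₁ D₂) :
    IsPartialMatching (Prod.swap '' Γ) D₂ D₁ := by
  constructor
  · rintro _ ⟨pq, hpq, rfl⟩
    exact (hΓ.1 pq hpq).symm
  · rintro _ ⟨pq, hpq, rfl⟩ _ ⟨pq', hpq', rfl⟩
    exact (hΓ.2 pq hpq pq' hpq').symm

theorem IsPartialMatching.injOn_fst (hΓ : IsPartialMatching Γ D₁ D₂) :
    Set.InjOn Prod.fst Γ :=
  fun pq hpq pq' hpq' h => Prod.ext h ((hΓ.2 pq hpq pq' hpq').1 h)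

theorem cost1_swap (Γ : Set ((ℝ × ℝ) × (ℝ × ℝ))) (D₁ D₂ : Set (ℝ × ℝ)) :
    cost1 (Prod.swap '' Γ) D₂ D₁ = cost1 Γ D₁ D₂ := by
  have hfst : Prod.fst '' (Prod.swap '' Γ) = Prod.snd '' Γ := by
    rw [Set.image_image]; rfl
  have hsnd : Prod.snd '' (Prod.swap '' Γ) = Prod.fst '' Γ := by
    rw [Set.image_image]; rfl
  have hmatched : ∑' pq : ↥(Prod.swap '' Γ), ENNReal.ofReal (dist pq.1.1 pq.1.2) =
      ∑' pq : Γ, ENNReal.ofReal (dist pq.1.1 pq.1.2) := by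
    rw [tsum_image (fun pq => ENNReal.ofReal (dist pq.1 pq.2)) Prod.swap_injective.injOn]
    simp only [Prod.fst_swap, Prod.snd_swap, dist_comm]
  rw [cost1, cost1, hfst, hsnd, hmatched, add_assoc, add_assoc,
    add_comm (∑' q : ↥(D₂ \ Prod.snd '' Γ), distDeltaE q)]

theorem d1_comm (D₁ D₂ : Set (ℝ × ℝ)) : d1 D₁ D₂ = d1 D₂ D₁ := by
  have h : ∀ D₁ D₂ : Set (ℝ × ℝ), d1 D₂ D₁ ≤ d1 D₁ D₂ := fun D₁ D₂ =>
    le_iInf₂ fun Γ hΓ =>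
      (iInf₂_le (Prod.swap '' Γ) hΓ.swap).trans_eq (cost1_swap Γ D₁ D₂)
  exact le_antisymm (h _ _) (h _ _)

/-- An unmatched point of `A` costs its persistence; a matched one costs at least as much. -/
theorem tsum_distDeltaE_le_d1 {A : Set (ℝ × ℝ)} (hA : A ⊆ D₁)
    (hfar : ∀ p ∈ A, ∀ q ∈ D₂, distDeltaE p ≤ ENNReal.ofReal (dist p q)) :
    ∑' p : A, distDeltaE p ≤ d1 D₁ D₂ := by
  refine le_iInf₂ fun Γ hΓ => ?_
  set M := Prod.fst '' Γ
  have hmatched : ∑' p : ↥(A ∩ M), distDeltaE p ≤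
      ∑' pq : Γ, ENNReal.ofReal (dist pq.1.1 pq.1.2) := by
    have hAM : A ∩ M = Prod.fst '' (Γ ∩ Prod.fst ⁻¹' A) := by
      rw [Set.image_inter_preimage, Set.inter_comm]
    rw [hAM, tsum_image distDeltaE (hΓ.injOn_fst.mono Set.inter_subset_left)]
    calc ∑' pq : ↥(Γ ∩ Prod.fst ⁻¹' A), distDeltaE pq.1.1
        ≤ ∑' pq : ↥(Γ ∩ Prod.fst ⁻¹' A), ENNReal.ofReal (dist pq.1.1 pq.1.2) :=
          ENNReal.tsum_le_tsum fun pq => hfar _ pq.2.2 _ (hΓ.1 _ pq.2.1).2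
      _ ≤ _ := ENNReal.tsum_mono_subtype
          (fun pq : (ℝ × ℝ) × (ℝ × ℝ) => ENNReal.ofReal (dist pq.1 pq.2))
          Set.inter_subset_left
  have hunmatched : ∑' p : ↥(A \ M), distDeltaE p ≤ ∑' q : ↥(D₁ \ M), distDeltaE q :=
    ENNReal.tsum_mono_subtype _ (Set.sdiff_subset_sdiff_left hA)
  calc ∑' p : A, distDeltaE p
      = ∑' p : ↥(A ∩ M ∪ A \ M), distDeltaE p := by rw [Set.inter_union_sdiff]
    _ ≤ ∑' p : ↥(A ∩ M), distDeltaE p + ∑' p : ↥(A \ M), distDeltaE p :=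
        ENNReal.tsum_union_le _ _ _
    _ ≤ cost1 Γ D₁ D₂ := (add_le_add hmatched hunmatched).trans le_self_add

end Matching

theorem pk_injective : Function.Injective pk := fun i j h => by
  have h₁ : (i : ℝ) = j := congrArg Prod.fst h
  exact_mod_cast h₁

theorem distDeltaE_pk (k : ℕ) : distDeltaE (pk k) = ENNReal.ofReal (1 / (2 * k)) := by
  rw [distDeltaE, pk]
  congr 1
  ring

theorem distDeltaE_pk_le_dist {i j : ℕ} (h : i ≠ j) :
    distDeltaE (pk i) ≤ ENNReal.ofReal (dist (pk i) (pk j)) := by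
  rw [distDeltaE_pk]
  refine ENNReal.ofReal_le_ofReal ?_
  calc 1 / (2 * (i : ℝ)) ≤ 1 := by
        rcases Nat.eq_zero_or_pos i with rfl | hi
        · simp
        · have : (1 : ℝ) ≤ i := by exact_mod_cast hi
          rw [div_le_one (by positivity)]
          linarith
    _ ≤ dist (i : ℝ) j := Nat.pairwise_one_le_dist h
    _ ≤ dist (pk i) (pk j) := by
        rw [Prod.dist_eq]
        exact le_max_left _ _

theorem tsum_distDeltaE_pk_le_d1 {u w F : Set ℕ} (hFu : F ⊆ u) (hFw : Disjoint F w) :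
    ∑' i : F, distDeltaE (pk i) ≤ d1 (Dgu u) (Dgu w) := by
  rw [← tsum_image distDeltaE pk_injective.injOn]
  refine tsum_distDeltaE_le_d1 (Set.image_mono hFu) ?_
  rintro _ ⟨i, hi, rfl⟩ _ ⟨j, hj, rfl⟩
  exact distDeltaE_pk_le_dist (hFw.ne_of_mem hi hj)

theorem tsum_distDeltaE_pk_le_d1_add {u v w B : Set ℕ} (hBu : B ⊆ u) (hBv : Disjoint B v) :
    ∑' i : B, distDeltaE (pk i) ≤ d1 (Dgu u) (Dgu w) + d1 (Dgu v) (Dgu w) := by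
  calc ∑' i : B, distDeltaE (pk i)
      = ∑' i : ↥(B \ w ∪ B ∩ w), distDeltaE (pk i) := by rw [Set.sdiff_union_inter]
    _ ≤ ∑' i : ↥(B \ w), distDeltaE (pk i) + ∑' i : ↥(B ∩ w), distDeltaE (pk i) :=
        ENNReal.tsum_union_le (fun i => distDeltaE (pk i)) _ _
    _ ≤ d1 (Dgu u) (Dgu w) + d1 (Dgu w) (Dgu v) :=
        add_le_add (tsum_distDeltaE_pk_le_d1 (Set.sdiff_subset.trans hBu) Set.disjoint_sdiff_left)
          (tsum_distDeltaE_pk_le_d1 Set.inter_subset_right (hBv.mono_left Set.inter_subset_left))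
    _ = d1 (Dgu u) (Dgu w) + d1 (Dgu v) (Dgu w) := by rw [d1_comm (Dgu w)]

def dyadicBlock (n : ℕ) : Set ℕ := Set.Ioc (2 ^ n) (2 ^ (n + 1))

theorem pairwise_disjoint_dyadicBlock :
    Pairwise fun m n => Disjoint (dyadicBlock m) (dyadicBlock n) :=
  (pow_right_mono₀ one_le_two).pairwise_disjoint_on_Ioc_succ

theorem ofReal_quarter_le_tsum_dyadicBlock (n : ℕ) :
    ENNReal.ofReal (1 / 4) ≤ ∑' i : dyadicBlock n, distDeltaE (pk i) := by
  have hcard : (Finset.Ioc (2 ^ n) (2 ^ (n + 1))).card = 2 ^ n := by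
    rw [Nat.card_Ioc, pow_succ]
    omega
  rw [dyadicBlock, ← Finset.coe_Ioc, Finset.tsum_subtype' _ fun i => distDeltaE (pk i)]
  simp_rw [distDeltaE_pk]
  rw [← ENNReal.ofReal_sum_of_nonneg fun i _ => by positivity]
  refine ENNReal.ofReal_le_ofReal ?_
  calc (1 / 4 : ℝ)
      = (Finset.Ioc (2 ^ n : ℕ) (2 ^ (n + 1))).card • (1 / (2 * 2 ^ (n + 1)) : ℝ) := by
        rw [hcard, nsmul_eq_mul, pow_succ]
        push_cast
        field_simp
        ring
    _ ≤ ∑ i ∈ Finset.Ioc (2 ^ n : ℕ) (2 ^ (n + 1)), 1 / (2 * (i : ℝ)) := by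
        refine Finset.card_nsmul_le_sum _ _ _ fun i hi => ?_
        have hi := Finset.mem_Ioc.mp hi
        have hpos : (0 : ℝ) < i := by exact_mod_cast Nat.zero_lt_of_lt hi.1
        have hle : (i : ℝ) ≤ 2 ^ (n + 1) := by exact_mod_cast hi.2
        exact one_div_le_one_div_of_le (by positivity) (by linarith)

def dyadicUnion (s : Set ℕ) : Set ℕ := ⋃ n ∈ s, dyadicBlock n

theorem Dgu_dyadicUnion_mem_Sdiag (s : Set ℕ) : Dgu (dyadicUnion s) ∈ Sdiag := by
  refine ⟨dyadicUnion s, fun k hk => ?_, rfl⟩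
  obtain ⟨n, -, hk⟩ := Set.mem_iUnion₂.mp hk
  exact Nat.zero_lt_of_lt hk.1

theorem disjoint_dyadicBlock_dyadicUnion {n : ℕ} {t : Set ℕ} (hn : n ∉ t) :
    Disjoint (dyadicBlock n) (dyadicUnion t) :=
  Set.disjoint_iUnion₂_right.mpr fun _ hm => pairwise_disjoint_dyadicBlock fun h => hn (h ▸ hm)

theorem subset_of_d1_dyadicUnion_lt {s t w : Set ℕ}
    (hs : d1 (Dgu (dyadicUnion s)) (Dgu w) < ENNReal.ofReal (1 / 8))
    (ht : d1 (Dgu (dyadicUnion t)) (Dgu w) < ENNReal.ofReal (1 / 8)) : s ⊆ t := by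
  intro n hn
  by_contra hnt
  have hle := (ofReal_quarter_le_tsum_dyadicBlock n).trans
    (tsum_distDeltaE_pk_le_d1_add (w := w) (Set.subset_biUnion_of_mem hn)
      (disjoint_dyadicBlock_dyadicUnion hnt))
  have hlt := hle.trans_lt (ENNReal.add_lt_add hs ht)
  rw [← ENNReal.ofReal_add (by norm_num) (by norm_num)] at hlt
  norm_num at hlt

/-- The set `S = {Dg_u}` of diagrams built on the points `p_k = (k, k+1/k)`,
equipped with the `1`-diagram distance, is not separable: it admits no countable
subset `T` such that every element of `S` is at distance `< ε` of some element of `T`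
for every `ε > 0`. -/
theorem Sdiag_not_separable :
    ¬ ∃ T : Set (Set (ℝ × ℝ)), T ⊆ Sdiag ∧ T.Countable ∧
      ∀ D ∈ Sdiag, ∀ ε : ℝ≥0∞, 0 < ε → ∃ D' ∈ T, d1 D D' < ε := by
  rintro ⟨T, hTS, hTc, hT⟩
  choose D hDT hD using fun s : Set ℕ =>
    hT _ (Dgu_dyadicUnion_mem_Sdiag s) (ENNReal.ofReal (1 / 8)) (by norm_num)
  have hinj : Function.Injective fun s => (⟨D s, hDT s⟩ : T) := by
    intro s t hst
    replace hst : D s = D t := congrArg Subtype.val hst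
    obtain ⟨w, -, hw⟩ := hTS (hDT s)
    have hs := hD s
    have ht := hD t
    rw [hw] at hs
    rw [← hst, hw] at ht
    exact (subset_of_d1_dyadicUnion_lt hs ht).antisymm (subset_of_d1_dyadicUnion_lt ht hs)
  have : Countable T := hTc.to_subtype
  obtain ⟨e, he⟩ := Countable.exists_injective_nat T
  exact Function.cantor_injective _ (he.comp hinj)

end
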